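/- (Upper bound for entropy.) Suppose h : [0,∞) → [0,∞] satisfies h(t) ≥ (n+m)²/(C²+(n+m)t) for all t ≥ 0, where C > 0. Then ((n+m)/2)log(2πe) + (1/2)∫₀^∞[(n+m)/(1+t) − h(t)]dt ≤ ((n+m)/2)·log((2πe/(n+m))·C²). In particular, χ*(X⊔Y : (B_ℓ,B_r)) ≤ ((n+m)/2)·log((2πe/(n+m))·C²) where C² = φ(∑Xᵢ² + ∑Yⱼ²). -/

import Mathlib

/-!
The Cramér–Rao bound `h t ≥ (n+m)² / (C² + (n+m) t) = (n+m) / (t + C²/(n+m))` bounds the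
integrand pointwise by `(n+m) (1/(1+t) - 1/(t + C²/(n+m)))`, whose integral over `(0, ∞)` is
`(n+m) log (C²/(n+m))`, as the primitive `log (1+t) - log (t + C²/(n+m))` vanishes at infinity.
-/

open MeasureTheory Set Real Filter Topology

lemma hasDerivAt_log_add_sub_log_add {a b x : ℝ} (ha : 0 < x + a) (hb : 0 < x + b) :
    HasDerivAt (fun x => log (x + b) - log (x + a)) ((x + b)⁻¹ - (x + a)⁻¹) x := by
  have hlog {c : ℝ} (hc : 0 < x + c) : HasDerivAt (fun x => log (x + c)) (x + c)⁻¹ x := by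
    simpa using ((hasDerivAt_id x).add_const c).log hc.ne'
  exact (hlog hb).sub (hlog ha)

lemma tendsto_log_add_sub_log_add_atTop (a b : ℝ) :
    Tendsto (fun x => log (x + b) - log (x + a)) atTop (𝓝 0) := by
  have hratio : Tendsto (fun x => 1 + (b - a) / (x + a)) atTop (𝓝 1) := by
    simpa using ((tendsto_atTop_add_const_right _ a tendsto_id).const_div_atTop
      (b - a)).const_add 1
  have hlog := ((continuousAt_log one_ne_zero).tendsto.comp hratio)
  rw [log_one] at hlog
  refine hlog.congr' ?_
  filter_upwards [eventually_gt_atTop (-a), eventually_gt_atTop (-b)] with x hxa hxb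
  have hxa : x + a ≠ 0 := by linarith
  have hratio_eq : 1 + (b - a) / (x + a) = (x + b) / (x + a) := by
    field_simp
    ring
  simp only [Function.comp_apply, hratio_eq]
  exact log_div (by linarith) hxa

lemma integrableOn_Ioi_inv_add_sub_inv_add {a b : ℝ} (ha : 0 < a) (hb : 0 < b) :
    IntegrableOn (fun x => (x + b)⁻¹ - (x + a)⁻¹) (Ioi 0) := by
  wlog hab : b ≤ a generalizing a b
  · simpa only [Pi.neg_def, neg_sub] using (this hb ha (le_of_not_ge hab)).neg
  refine integrableOn_Ioi_deriv_of_nonneg' (fun x hx => ?_) (fun x hx => ?_)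
    (tendsto_log_add_sub_log_add_atTop a b)
  · exact hasDerivAt_log_add_sub_log_add (by simp at hx; linarith) (by simp at hx; linarith)
  · have hx : 0 < x := hx
    exact sub_nonneg.2 (inv_anti₀ (by linarith) (by linarith))

lemma integral_Ioi_inv_add_sub_inv_add {a b : ℝ} (ha : 0 < a) (hb : 0 < b) :
    ∫ x in Ioi (0 : ℝ), ((x + b)⁻¹ - (x + a)⁻¹) = log a - log b := by
  rw [integral_Ioi_of_hasDerivAt_of_tendsto' (fun x hx => ?_)
    (integrableOn_Ioi_inv_add_sub_inv_add ha hb) (tendsto_log_add_sub_log_add_atTop a b)]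
  · simp
  · exact hasDerivAt_log_add_sub_log_add (by simp at hx; linarith) (by simp at hx; linarith)

lemma div_add_div_self_eq_sq_div (N c t : ℝ) : N / (t + c / N) = N ^ 2 / (c + N * t) := by
  rcases eq_or_ne N 0 with rfl | hN
  · simp
  · rw [← mul_div_mul_left N _ hN, mul_add, mul_div_cancel₀ c hN, add_comm, sq]

lemma integral_Ioi_mul_inv_add_one_sub_inv_add_div {N c : ℝ} (hN : 0 ≤ N) (hc : 0 < c) :
    IntegrableOn (fun t => N * ((t + 1)⁻¹ - (t + c / N)⁻¹)) (Ioi 0) ∧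
      ∫ t in Ioi (0 : ℝ), N * ((t + 1)⁻¹ - (t + c / N)⁻¹) = N * log (c / N) := by
  rcases hN.eq_or_lt with rfl | hN
  · simp
  have hcN : 0 < c / N := by positivity
  refine ⟨(integrableOn_Ioi_inv_add_sub_inv_add hcN one_pos).const_mul N, ?_⟩
  rw [integral_const_mul, integral_Ioi_inv_add_sub_inv_add hcN one_pos, log_one, sub_zero]

/-- Upper bound for the non-microstate bi-free entropy.  If the Fisher
information along the semicircular flow satisfies the Cramer–Rao bound
`h(t) ≥ (n+m)²/(C²+(n+m)t)`, then
`((n+m)/2)log(2πe) + (1/2)∫₀^∞[(n+m)/(1+t) − h(t)]dt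
  ≤ ((n+m)/2)·log((2πe/(n+m))·C²)`.
In particular `χ*(X⊔Y : (B_ℓ,B_r)) ≤ ((n+m)/2)·log((2πe/(n+m))·C²)` with
`C² = φ(∑Xᵢ² + ∑Yⱼ²)`. -/
theorem stmt12 (n m : ℕ) (C : ℝ) (hC : 0 < C) (h : ℝ → ℝ)
    (hlow : ∀ t ≥ (0:ℝ), ((n+m : ℝ))^2 / (C^2 + (n+m) * t) ≤ h t)
    (hint : IntegrableOn (fun t => (n+m : ℝ)/(1+t) - h t) (Ioi 0)) :
    (n+m : ℝ)/2 * Real.log (2 * π * Real.exp 1)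
        + (1/2) * ∫ t in Ioi (0:ℝ), ((n+m : ℝ)/(1+t) - h t)
      ≤ (n+m : ℝ)/2 * Real.log ((2 * π * Real.exp 1 / (n+m)) * C^2) := by
  set N : ℝ := n + m
  have hN : 0 ≤ N := by positivity
  obtain ⟨hgap_int, hgap⟩ := integral_Ioi_mul_inv_add_one_sub_inv_add_div hN (pow_pos hC 2)
  have hI : ∫ t in Ioi (0 : ℝ), (N / (1 + t) - h t) ≤ N * log (C ^ 2 / N) := by
    refine hgap ▸ setIntegral_mono_on hint hgap_int measurableSet_Ioi fun t ht => ?_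
    have hlow_t := hlow t (le_of_lt ht)
    rw [← div_add_div_self_eq_sq_div] at hlow_t
    rw [mul_sub, ← div_eq_mul_inv, ← div_eq_mul_inv, add_comm t 1]
    linarith
  have hlog : N * log (2 * π * exp 1 / N * C ^ 2)
      = N * log (2 * π * exp 1) + N * log (C ^ 2 / N) := by
    rcases hN.eq_or_lt with hN0 | hN
    · simp [← hN0]
    rw [show 2 * π * exp 1 / N * C ^ 2 = 2 * π * exp 1 * (C ^ 2 / N) by ring,
      log_mul (by positivity) (by positivity), mul_add]
  linarith
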